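/- arXiv:1906.01940 — 4 statements merged into one kernel-verified Lean document; each statement's English description precedes it below -/
import Mathlib

section
/- Let p, A, B, m, x, n, s, ρ be real numbers with B < 0, x > 0, n > 1, s > 0, ρ > 0, and suppose the static first-order condition p + A·x − m = 0 holds. Then p + A·x − m + (s·B·x²/(ρ − n·s·B·x²))·(p + A·x + (n−1)·B·x − m) > 0. -/
theorem openloop_foc_positive_at_static (p A B m x n s ρ : ℝ) (hB : B < 0)
    (hx : x > 0) (hn : n > 1) (hs : s > 0) (hρ : ρ > 0)
    (hstatic : p + A * x - m = 0) :
    p + A * x - m + (s * B * x ^ 2 / (ρ - n * s * B * x ^ 2)) *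
      (p + A * x + (n - 1) * B * x - m) > 0 := by
  have hnum : s * B * x ^ 2 < 0 := by
    have := mul_pos hs (pow_pos hx 2)
    nlinarith
  have hden : 0 < ρ - n * s * B * x ^ 2 := by nlinarith
  have hfrac : s * B * x ^ 2 / (ρ - n * s * B * x ^ 2) < 0 := div_neg_of_neg_of_pos hnum hden
  have h2 : p + A * x + (n - 1) * B * x - m = (n - 1) * B * x := by linarith
  rw [h2]
  have : (n - 1) * B * x < 0 := mul_neg_of_neg_of_pos (mul_neg_of_pos_of_neg (by linarith) hB) hx
  nlinarith [mul_pos_of_neg_of_neg hfrac this]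
end

section
/- Let a, b, c, f, s, ρ, x, n be real numbers with 0 < b < 1, f > 0, s > 0, ρ > 0, x > 0, n > 1, satisfying the open-loop steady-state first-order condition (a − 2x − (n−1)·b·x − c) − (b²·s·x²/(ρ + n·b·s·x²))·(a − 2x − 2(n−1)·b·x − c) = 0 and the free-entry condition (a − x − (n−1)·b·x − c)·x − f = 0. Then x > √f. -/
theorem openloop_output_exceeds_static (a b c f s ρ x n : ℝ) (hb0 : 0 < b)
    (hb1 : b < 1) (hf : f > 0) (hs : s > 0) (hρ : ρ > 0) (hx : x > 0)
    (hn : n > 1)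
    (hfoc : (a - 2 * x - (n - 1) * b * x - c) -
      (b ^ 2 * s * x ^ 2 / (ρ + n * b * s * x ^ 2)) *
        (a - 2 * x - 2 * (n - 1) * b * x - c) = 0)
    (hfree : (a - x - (n - 1) * b * x - c) * x - f = 0) :
    x > Real.sqrt f := by
  have hn0 : (0:ℝ) < n := by linarith
  have hD : 0 < ρ + n * b * s * x ^ 2 := by positivity
  set k := b ^ 2 * s * x ^ 2 / (ρ + n * b * s * x ^ 2) with hkdef
  have hk0 : 0 < k := by rw [hkdef]; positivity
  have hk1 : k < 1 := by
    rw [hkdef, div_lt_one hD]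
    nlinarith [mul_pos hs (pow_pos hx 2), mul_pos (mul_pos hs (pow_pos hx 2)) hb0]
  have hw : 0 < (n - 1) * b * x := mul_pos (mul_pos (by linarith) hb0) hx
  have hP : a - 2 * x - (n - 1) * b * x - c < 0 := by
    nlinarith [hfoc, mul_pos hk0 hw, mul_pos hk0 hw]
  have hf2 : f < x ^ 2 := by
    nlinarith [mul_pos hx (neg_pos.mpr hP)]
  have := (Real.sqrt_lt' hx).mpr hf2
  linarith
end

section
/- Let a, b, c, f, s, ρ be real numbers with 0 < b < 1, f > 0, s > 0, ρ > 0 and a − c > 2√f. Suppose (x*, n*) with x* > 0, n* > 1 satisfies the open-loop steady-state first-order condition (a − 2x* − (n*−1)·b·x* − c) − (b²·s·(x*)²/(ρ + n*·b·s·(x*)²))·(a − 2x* − 2(n*−1)·b·x* − c) = 0 and the free-entry condition (a − x* − (n*−1)·b·x* − c)·x* − f = 0, and suppose (x̃, ñ) with x̃ > 0, ñ > 1 satisfies the static first-order condition a − 2x̃ − (ñ−1)·b·x̃ − c = 0 and the free-entry condition (a − x̃ − (ñ−1)·b·x̃ − c)·x̃ − f = 0. Then n* < ñ. -/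
theorem openloop_fewer_firms (a b c f s ρ xs ns xt nt : ℝ) (hb0 : 0 < b)
    (hb1 : b < 1) (hf : f > 0) (hs : s > 0) (hρ : ρ > 0)
    (hac : a - c > 2 * Real.sqrt f)
    (hxs : xs > 0) (hns : ns > 1)
    (hfocs : (a - 2 * xs - (ns - 1) * b * xs - c) -
      (b ^ 2 * s * xs ^ 2 / (ρ + ns * b * s * xs ^ 2)) *
        (a - 2 * xs - 2 * (ns - 1) * b * xs - c) = 0)
    (hfrees : (a - xs - (ns - 1) * b * xs - c) * xs - f = 0)
    (hxt : xt > 0) (hnt : nt > 1)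
    (hfoct : a - 2 * xt - (nt - 1) * b * xt - c = 0)
    (hfreet : (a - xt - (nt - 1) * b * xt - c) * xt - f = 0) :
    ns < nt := by
  -- static equilibrium output: xt^2 = f
  have ht2 : xt ^ 2 = f := by linear_combination hfreet - xt * hfoct
  have hns0 : (0:ℝ) < ns := by linarith
  have hD : 0 < ρ + ns * b * s * xs ^ 2 := by
    have h1 : 0 < ns * b * s * xs ^ 2 :=
      mul_pos (mul_pos (mul_pos hns0 hb0) hs) (pow_pos hxs 2)
    linarith
  set A : ℝ := a - 2 * xs - (ns - 1) * b * xs - c with hA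
  set M : ℝ := (ns - 1) * b * xs with hM
  have hM0 : 0 < M := mul_pos (mul_pos (by linarith) hb0) hxs
  -- clear the denominator in the open-loop FOC
  have hfoc' : A * (ρ + ns * b * s * xs ^ 2) - b ^ 2 * s * xs ^ 2 * (A - M) = 0 := by
    have h2 : a - 2 * xs - 2 * (ns - 1) * b * xs - c = A - M := by rw [hA, hM]; ring
    have hcopy := hfocs
    rw [h2] at hcopy
    field_simp at hcopy
    linarith
  clear hfocs
  -- the effective denominator gap is positive
  have hb2 : b ^ 2 * s * xs ^ 2 < ns * b * s * xs ^ 2 := by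
    have h3 : 0 < s * xs ^ 2 := mul_pos hs (pow_pos hxs 2)
    have h4 : b ^ 2 < ns * b := by nlinarith
    nlinarith
  have hDN : 0 < (ρ + ns * b * s * xs ^ 2) - b ^ 2 * s * xs ^ 2 := by linarith
  have hNM : 0 < b ^ 2 * s * xs ^ 2 * M := by positivity
  have key : A * ((ρ + ns * b * s * xs ^ 2) - b ^ 2 * s * xs ^ 2) = -(b ^ 2 * s * xs ^ 2 * M) := by
    linear_combination hfoc'
  -- the open-loop markup term is negative
  have hAneg : A < 0 := by
    by_contra h
    push_neg at h
    nlinarith [mul_nonneg h hDN.le]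
  -- free entry: A*xs + xs^2 = f
  have hfe2 : A * xs + xs ^ 2 = f := by
    rw [hA]; linear_combination hfrees
  have hAxs : A * xs < 0 := mul_neg_of_neg_of_pos hAneg hxs
  have hsq : xt ^ 2 < xs ^ 2 := by linarith
  -- hence xs > xt
  have hxx : xt < xs := by nlinarith [sq_nonneg (xs - xt), sq_nonneg (xs + xt), mul_pos hxs hxt]
  -- compare the entry conditions
  have h3 : (a - 2 * xt - (nt - 1) * b * xt - c) * xs = 0 := by rw [hfoct]; ring
  have hqpos : 0 < (xs - xt) ^ 2 := pow_pos (sub_pos.mpr hxx) 2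
  have hMMt : M * xs < ((nt - 1) * b * xt) * xs := by
    have hid : ((nt - 1) * b * xt) * xs - M * xs = (xs - xt) ^ 2 := by
      rw [hM]; linear_combination hfe2 - h3 - ht2
    linarith
  have hMlt : M < (nt - 1) * b * xt := lt_of_mul_lt_mul_right hMMt (le_of_lt hxs)
  -- conclude ns < nt
  have hlast : (nt - 1) * b * xt < (nt - 1) * b * xs := by
    have h0 : 0 < (nt - 1) * b := mul_pos (by linarith) hb0
    exact (mul_lt_mul_iff_right₀ h0).mpr hxx
  rw [hM] at hMlt
  have hbxs : 0 < b * xs := mul_pos hb0 hxs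
  have hfin : (ns - 1) * b * xs < (nt - 1) * b * xs := lt_trans hMlt hlast
  rw [mul_assoc, mul_assoc] at hfin
  have := lt_of_mul_lt_mul_right hfin hbxs.le
  linarith
end

section
/- Let p, A, B, m, x, n, s, ρ, X be real numbers with B < 0, x > 0, n > 1, s > 0, ρ > 0, X ≥ 0, D := p + A·x + (n−1)·B·x − m < 0, Q := p + (A−B)·x − m > 0, and suppose (p + A·x − m) + ((B·s·x² − (n−1)·s·Q·X)/(ρ − n·s·B·x²))·D = 0. Then L := (B·s·x² − (n−1)·s·Q·X)/(ρ − n·s·B·x²) < 0 and p + A·x − m < 0. -/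
theorem closedloop_contradiction_step (p A B m x n s ρ X : ℝ) (hB : B < 0)
    (hx : x > 0) (hn : n > 1) (hs : s > 0) (hρ : ρ > 0) (hX : X ≥ 0)
    (hD : p + A * x + (n - 1) * B * x - m < 0)
    (hQ : p + (A - B) * x - m > 0)
    (hfoc : (p + A * x - m) +
      ((B * s * x ^ 2 - (n - 1) * s * (p + (A - B) * x - m) * X) /
        (ρ - n * s * B * x ^ 2)) * (p + A * x + (n - 1) * B * x - m) = 0) :
    (B * s * x ^ 2 - (n - 1) * s * (p + (A - B) * x - m) * X) /
      (ρ - n * s * B * x ^ 2) < 0 ∧ p + A * x - m < 0 := by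
  have hx2 : (0:ℝ) < x ^ 2 := by positivity
  have h1 : n * s * B * x ^ 2 < 0 := by
    have := mul_neg_of_pos_of_neg (mul_pos (mul_pos (show (0:ℝ) < n by linarith) hs) hx2) hB
    nlinarith [this]
  have hden : (0:ℝ) < ρ - n * s * B * x ^ 2 := by linarith
  have h2 : B * s * x ^ 2 < 0 := by nlinarith [mul_pos hs hx2]
  have h3 : (0:ℝ) ≤ (n - 1) * s * (p + (A - B) * x - m) * X :=
    mul_nonneg (mul_nonneg (mul_nonneg (by linarith) hs.le) hQ.le) hX
  have hnum : B * s * x ^ 2 - (n - 1) * s * (p + (A - B) * x - m) * X < 0 := by linarith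
  have hL := div_neg_of_neg_of_pos hnum hden
  refine ⟨hL, ?_⟩
  nlinarith [mul_pos_of_neg_of_neg hL hD]
end
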